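/- arXiv:0710.1103 — 3 statements merged into one kernel-verified Lean document; each statement's English description precedes it below -/
import Mathlib

section
/- Let F ∈ K[X,Y] be a squarefree polynomial divisible by neither X nor Y, and let σ1, σ2 be positive integers such that p ∤ σ1 and p ∤ σ2 (no divisibility condition when p = 0). Then the polynomial F(X^{σ1}, Y^{σ2}) ∈ K[X,Y] is squarefree. -/
/-!
Write `φ` for the substitution `Xᵢ ↦ Xᵢ ^ wᵢ`. If a prime `G` satisfies `G² ∣ φ F`, then `G`
divides each `∂ᵢ (φ F) = φ (∂ᵢ F) · wᵢ Xᵢ ^ (wᵢ - 1)`; as `wᵢ` is a unit and `Xᵢ ∤ φ F`, it divides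
every `φ (∂ᵢ F)` as well as `φ F`. The product of the conjugates of `G` under the scalings
`Xᵢ ↦ ζᵢ Xᵢ` by `wᵢ`-th roots of unity is invariant, hence equal to `φ M` for some `M`, and `φ`
reflects divisibility; so a prime factor `q` of `M` divides `F` and every `∂ᵢ F`. Since `F` is
squarefree this forces `q ∣ ∂ᵢ q`, i.e. `∂ᵢ q = 0`, for all `i`; over a perfect field `q` is then a
`p`-th power or a constant, which is absurd for a prime.
-/

namespace MvPolynomial

variable {ι R : Type*} [CommSemiring R]

noncomputable def expandVars (w : ι → ℕ) : MvPolynomial ι R →ₐ[R] MvPolynomial ι R :=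
  bind₁ fun i ↦ X i ^ w i

variable (w : ι → ℕ)

@[simp]
theorem expandVars_X (i : ι) : expandVars w (X i : MvPolynomial ι R) = X i ^ w i :=
  bind₁_X_right _ _

@[simp]
theorem expandVars_monomial (m : ι →₀ ℕ) (r : R) :
    expandVars w (monomial m r) = monomial (w • m) r := by
  rw [expandVars, bind₁_monomial, monomial_eq, Finsupp.prod_of_support_subset _
    (s := m.support)]
  · simp [pow_mul, Finsupp.coe_pointwise_smul]
  · intro i; simp +contextual [Finsupp.coe_pointwise_smul]
  · simp

theorem expandVars_const (p : ℕ) : expandVars (fun _ ↦ p) = expand (σ := ι) (R := R) p := rfl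

variable {w}

theorem _root_.Finsupp.pointwise_smul_right_injective (hw : ∀ i, w i ≠ 0) :
    Function.Injective (w • · : (ι →₀ ℕ) → ι →₀ ℕ) := fun m m' h ↦ by
  ext i
  simpa [Finsupp.coe_pointwise_smul, hw i] using DFunLike.congr_fun h i

@[simp]
theorem coeff_expandVars_smul (hw : ∀ i, w i ≠ 0) (P : MvPolynomial ι R) (m : ι →₀ ℕ) :
    (expandVars w P).coeff (w • m) = P.coeff m := by
  classical
  induction P using induction_on' <;> simp [*, coeff_monomial,
    (Finsupp.pointwise_smul_right_injective hw).eq_iff]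

theorem expandVars_injective (hw : ∀ i, w i ≠ 0) :
    Function.Injective (expandVars w : MvPolynomial ι R → MvPolynomial ι R) := fun P Q h ↦ by
  ext m
  rw [← coeff_expandVars_smul hw, h, coeff_expandVars_smul hw]

theorem exists_expandVars_eq {P : MvPolynomial ι R}
    (hP : ∀ m ∈ P.support, ∀ i, w i ∣ m i) : ∃ Q, expandVars w Q = P := by
  suffices P ∈ (expandVars w : MvPolynomial ι R →ₐ[R] _).range from this
  rw [P.as_sum]
  refine Subalgebra.sum_mem _ fun m hm ↦ ⟨monomial (Finsupp.onFinset m.support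
    (fun i ↦ m i / w i) fun i hi ↦ Finsupp.mem_support_iff.mpr fun h ↦ hi (by simp [h]))
    (P.coeff m), ?_⟩
  change expandVars w _ = _
  rw [expandVars_monomial]
  congr
  ext i
  simp [Finsupp.coe_pointwise_smul, Nat.mul_div_cancel' (hP m hm i)]

theorem X_dvd_iff_forall_coeff {i : ι} {P : MvPolynomial ι R} :
    X i ∣ P ↔ ∀ m : ι →₀ ℕ, m i = 0 → P.coeff m = 0 := by
  rw [X_dvd_iff_modMonomial_eq_zero, MvPolynomial.ext_iff]
  refine forall_congr' fun m ↦ ?_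
  by_cases hm : m i = 0
  · simp [coeff_modMonomial_of_not_le, Finsupp.single_le_iff, hm]
  · simp [coeff_modMonomial_of_le, Finsupp.single_le_iff, hm, Nat.one_le_iff_ne_zero]

theorem X_dvd_expandVars_iff (hw : ∀ i, w i ≠ 0) {i : ι} {P : MvPolynomial ι R} :
    X i ∣ expandVars w P ↔ X i ∣ P := by
  refine ⟨fun h ↦ X_dvd_iff_forall_coeff.mpr fun m hm ↦ ?_, fun h ↦
    (dvd_pow_self (X i) (hw i)).trans (by simpa using map_dvd (expandVars w) h)⟩
  rw [← coeff_expandVars_smul hw]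
  exact X_dvd_iff_forall_coeff.mp h _ (by simp [Finsupp.coe_pointwise_smul, hm])

theorem pderiv_expandVars (i : ι) (P : MvPolynomial ι R) :
    pderiv i (expandVars w P) =
      expandVars w (pderiv i P) * ((w i : MvPolynomial ι R) * X i ^ (w i - 1)) := by
  classical
  induction P using MvPolynomial.induction_on with
  | C a => simp [expandVars]
  | add P Q hP hQ => simp [hP, hQ, add_mul]
  | mul_X P j h =>
    simp only [map_mul, Derivation.leibniz, expandVars_X, h, pderiv_X, pderiv_pow, smul_eq_mul]
    rcases eq_or_ne j i with rfl | hji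
    · simp only [Pi.single_eq_same, map_add, map_mul, map_one, expandVars_X]
      ring
    · simp [hji]
      ring

noncomputable def scaleVars (c : ι → R) : MvPolynomial ι R →ₐ[R] MvPolynomial ι R :=
  aeval fun i ↦ C (c i) * X i

@[simp]
theorem scaleVars_X (c : ι → R) (i : ι) : scaleVars c (X i) = C (c i) * X i :=
  aeval_X _ _

theorem scaleVars_scaleVars (c d : ι → R) (P : MvPolynomial ι R) :
    scaleVars c (scaleVars d P) = scaleVars (c * d) P := by
  rw [← AlgHom.comp_apply]
  congr 1
  ext i
  simp [mul_left_comm, mul_comm]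

@[simp]
theorem scaleVars_one (P : MvPolynomial ι R) : scaleVars 1 P = P := by
  rw [← AlgHom.id_apply (R := R) P]
  congr 1
  ext i
  simp

theorem coeff_scaleVars (c : ι → R) (P : MvPolynomial ι R) (m : ι →₀ ℕ) :
    (scaleVars c P).coeff m = (m.prod fun i k ↦ c i ^ k) * P.coeff m := by
  classical
  induction P using induction_on' with
  | monomial n a =>
    have : (n.prod fun i k ↦ (C (c i) * X i) ^ k) =
        C (n.prod fun i k ↦ c i ^ k) * (n.prod fun i k ↦ X i ^ k) := by
      simp only [mul_pow, Finsupp.prod_mul, ← C_pow, map_finsuppProd]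
    rw [scaleVars, aeval_monomial, this, ← monomial_eq, algebraMap_eq, coeff_C_mul,
      coeff_monomial, coeff_monomial]
    split_ifs with h
    · rw [h]; ring
    · simp
  | add P Q hP hQ => simp [hP, hQ, mul_add]

theorem scaleVars_expandVars {c : ι → R} (hc : ∀ i, c i ^ w i = 1) (P : MvPolynomial ι R) :
    scaleVars c (expandVars w P) = expandVars w P := by
  rw [← AlgHom.comp_apply]
  congr 1
  ext i
  simp [mul_pow, ← C_pow, hc]

section DerivativeTest

variable {i : ι} {P Q : MvPolynomial ι R}

theorem degreeOf_pderiv_lt (h : pderiv i P ≠ 0) : degreeOf i (pderiv i P) < degreeOf i P := by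
  have hle : ∀ m ∈ (pderiv i P).support, m i + 1 ≤ degreeOf i P := fun m hm ↦ by
    have hm' : m + Finsupp.single i 1 ∈ P.support := by
      rw [mem_support_iff, coeff_pderiv] at hm
      exact mem_support_iff.mpr (left_ne_zero_of_mul hm)
    simpa using monomial_le_degreeOf i hm'
  obtain ⟨m, hm⟩ := support_nonempty.mpr h
  exact (degreeOf_lt_iff (by have := hle m hm; omega)).mpr fun m hm ↦ hle m hm

theorem degreeOf_le_of_dvd [NoZeroDivisors R] (h : P ∣ Q) (hQ : Q ≠ 0) :
    degreeOf i P ≤ degreeOf i Q := by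
  obtain ⟨T, rfl⟩ := h
  rw [degreeOf_mul_eq (left_ne_zero_of_mul hQ) (right_ne_zero_of_mul hQ)]
  exact Nat.le_add_right _ _

theorem pderiv_eq_zero_of_dvd_pderiv [NoZeroDivisors R] (h : P ∣ pderiv i P) :
    pderiv i P = 0 := by
  by_contra hne
  exact (degreeOf_le_of_dvd h hne).not_gt (degreeOf_pderiv_lt hne)

theorem natCast_eq_zero_of_pderiv_eq_zero [NoZeroDivisors R] (h : pderiv i P = 0) {m : ι →₀ ℕ}
    (hm : m ∈ P.support) : (m i : R) = 0 := by
  obtain hmi | hmi := eq_or_ne (m i) 0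
  · simp [hmi]
  have hm' : m - Finsupp.single i 1 + Finsupp.single i 1 = m :=
    tsub_add_cancel_of_le (Finsupp.single_le_iff.mpr (Nat.one_le_iff_ne_zero.mpr hmi))
  have := coeff_pderiv (i := i) P (m - Finsupp.single i 1)
  rw [h, coeff_zero, hm'] at this
  have hmi' : (m i - 1 + 1 : ℕ) = m i := by omega
  simpa [mem_support_iff.mp hm, ← Nat.cast_add_one, hmi'] using this.symm

end DerivativeTest

theorem expand_eq_map_frobeniusEquiv_symm_pow (p : ℕ) [ExpChar R p] [PerfectRing R p]
    (P : MvPolynomial ι R) : expand p P = map (frobeniusEquiv R p).symm P ^ p := by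
  rw [← frobenius_def, ← RingHom.comp_apply]
  change (expand p : MvPolynomial ι R →ₐ[R] _).toRingHom P = _
  congr 1
  ext
  · simp [frobenius_def, ← C_pow]
  · simp [frobenius_def]

section PerfectField

variable {K : Type*} [Field K] [PerfectField K]

theorem _root_.Prime.exists_pderiv_ne_zero {P : MvPolynomial ι K} (hP : Prime P) :
    ∃ i, pderiv i P ≠ 0 := by
  by_contra! h
  obtain ⟨Q, rfl⟩ : ∃ Q, expandVars (fun _ ↦ ringChar K) Q = P :=
    exists_expandVars_eq fun m hm i ↦
      (ringChar.spec K (m i)).mp (natCast_eq_zero_of_pderiv_eq_zero (h i) hm)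
  rw [expandVars_const] at hP
  -- in characteristic zero, `expand 0` maps everything to constants
  rcases CharP.char_is_prime_or_zero K (ringChar K) with hp | hp
  · have : ExpChar K (ringChar K) := ExpChar.prime hp
    rw [expand_eq_map_frobeniusEquiv_symm_pow] at hP
    exact not_prime_pow hp.ne_one hP
  · rw [hp, expand_zero_apply] at hP
    exact hP.not_isUnit ((isUnit_iff_ne_zero.mpr fun h0 ↦ hP.ne_zero (by rw [h0, C_0])).map C)

theorem _root_.Squarefree.exists_not_dvd_pderiv {F q : MvPolynomial ι K} (hF : Squarefree F)
    (hq : Prime q) (hqF : q ∣ F) : ∃ i, ¬ q ∣ pderiv i F := by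
  obtain ⟨H, rfl⟩ := hqF
  have hqH : ¬ q ∣ H := fun h ↦ hq.not_isUnit (hF q (mul_dvd_mul_left q h))
  obtain ⟨i, hi⟩ := hq.exists_pderiv_ne_zero
  refine ⟨i, fun h ↦ hi (pderiv_eq_zero_of_dvd_pderiv ?_)⟩
  rw [pderiv_mul, dvd_add_left (dvd_mul_right q _)] at h
  exact (hq.dvd_or_dvd h).resolve_right hqH

end PerfectField

section RootsOfUnity

variable {K : Type*} [Field K] {w : ι → ℕ}

theorem scaleVars_rootsOfUnity_expandVars (h : ∀ i, rootsOfUnity (w i) K)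
    (P : MvPolynomial ι K) :
    scaleVars (fun i ↦ ((h i : Kˣ) : K)) (expandVars w P) = expandVars w P :=
  scaleVars_expandVars (fun i ↦ by
    rw [← Units.val_pow_eq_pow_val, (mem_rootsOfUnity _ _).mp (h i).2, Units.val_one]) P

theorem scaleVars_units_ne_zero (c : ι → Kˣ) {P : MvPolynomial ι K} (hP : P ≠ 0) :
    scaleVars (fun i ↦ (c i : K)) P ≠ 0 := fun h ↦ hP <| by
  simpa [scaleVars_scaleVars, Pi.mul_def, ← Pi.one_def] using
    congrArg (scaleVars fun i ↦ ((c i)⁻¹ : K)) h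

variable [∀ i, NeZero (w i)] [∀ i, HasEnoughRootsOfUnity K (w i)]

theorem exists_expandVars_eq_of_forall_scaleVars_eq {P : MvPolynomial ι K}
    (hP : ∀ h : ∀ i, rootsOfUnity (w i) K, scaleVars (fun i ↦ ((h i : Kˣ) : K)) P = P) :
    ∃ Q, expandVars w Q = P := by
  classical
  refine exists_expandVars_eq fun m hm j ↦ ?_
  obtain ⟨ζ, hζ⟩ := HasEnoughRootsOfUnity.exists_primitiveRoot K (w j)
  have hcoeff := congrArg (coeff m)
    (hP (Pi.mulSingle j hζ.toRootsOfUnity : ∀ i, rootsOfUnity (w i) K))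
  rw [coeff_scaleVars] at hcoeff
  have : (m.prod fun i k ↦
      (((Pi.mulSingle j hζ.toRootsOfUnity : ∀ i, rootsOfUnity (w i) K) i : Kˣ) : K) ^ k) =
      ζ ^ m j := by
    rw [Finsupp.prod, Finset.prod_eq_single j]
    · simp
    · intro i _ hij; simp [Pi.mulSingle_eq_of_ne hij]
    · intro hj; simp [Finsupp.notMem_support_iff.mp hj]
  rw [this] at hcoeff
  exact (hζ.pow_eq_one_iff_dvd _).mp ((mul_eq_right₀ (mem_support_iff.mp hm)).mp hcoeff)

theorem expandVars_dvd_expandVars_iff {M B : MvPolynomial ι K} :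
    expandVars w M ∣ expandVars w B ↔ M ∣ B := by
  have hw (i : ι) : w i ≠ 0 := NeZero.ne (w i)
  refine ⟨fun ⟨T, hT⟩ ↦ ?_, map_dvd _⟩
  obtain hM | hM := eq_or_ne M 0
  · rw [hM, map_zero, zero_mul, ← map_zero (expandVars w)] at hT
    rw [hM, expandVars_injective hw hT]
  have hT_inv (h : ∀ i, rootsOfUnity (w i) K) : scaleVars (fun i ↦ ((h i : Kˣ) : K)) T = T := by
    have := congrArg (scaleVars fun i ↦ ((h i : Kˣ) : K)) hT
    rw [map_mul, scaleVars_rootsOfUnity_expandVars, scaleVars_rootsOfUnity_expandVars, hT] at this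
    exact (mul_left_cancel₀ ((map_ne_zero_iff _ (expandVars_injective hw)).mpr hM) this).symm
  obtain ⟨T', rfl⟩ := exists_expandVars_eq_of_forall_scaleVars_eq hT_inv
  exact ⟨T', expandVars_injective hw (by rw [hT, map_mul])⟩

end RootsOfUnity

section OrbitProd

variable {K : Type*} [Field K] [Finite ι]

noncomputable def orbitProd (w : ι → ℕ) [∀ i, NeZero (w i)] (G : MvPolynomial ι K) :
    MvPolynomial ι K :=
  let := Fintype.ofFinite (∀ i, rootsOfUnity (w i) K)
  ∏ h : ∀ i, rootsOfUnity (w i) K, scaleVars (fun i ↦ ((h i : Kˣ) : K)) G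

variable {w : ι → ℕ} [∀ i, NeZero (w i)]

theorem scaleVars_orbitProd (h : ∀ i, rootsOfUnity (w i) K) (G : MvPolynomial ι K) :
    scaleVars (fun i ↦ ((h i : Kˣ) : K)) (orbitProd w G) = orbitProd w G := by
  let := Fintype.ofFinite (∀ i, rootsOfUnity (w i) K)
  simp only [orbitProd, map_prod, scaleVars_scaleVars]
  exact Fintype.prod_equiv (Equiv.mulLeft h) _ _ fun k ↦ rfl

theorem dvd_orbitProd (G : MvPolynomial ι K) : G ∣ orbitProd w G := by
  let := Fintype.ofFinite (∀ i, rootsOfUnity (w i) K)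
  rw [orbitProd]
  simpa [← Pi.one_def] using Finset.dvd_prod_of_mem (fun h : ∀ i, rootsOfUnity (w i) K ↦
    scaleVars (fun i ↦ ((h i : Kˣ) : K)) G) (Finset.mem_univ 1)

theorem orbitProd_ne_zero {G : MvPolynomial ι K} (hG : G ≠ 0) : orbitProd w G ≠ 0 := by
  let := Fintype.ofFinite (∀ i, rootsOfUnity (w i) K)
  rw [orbitProd]
  exact Finset.prod_ne_zero_iff.mpr fun h _ ↦ scaleVars_units_ne_zero (fun i ↦ (h i : Kˣ)) hG

theorem orbitProd_dvd_pow {G B : MvPolynomial ι K} (hG : G ∣ expandVars w B) :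
    ∃ n, orbitProd w G ∣ expandVars w B ^ n := by
  let := Fintype.ofFinite (∀ i, rootsOfUnity (w i) K)
  refine ⟨Fintype.card (∀ i, rootsOfUnity (w i) K), ?_⟩
  rw [← Finset.card_univ, ← Finset.prod_const]
  refine Finset.prod_dvd_prod_of_dvd _ _ fun h _ ↦ ?_
  simpa [scaleVars_rootsOfUnity_expandVars] using map_dvd (scaleVars fun i ↦ ((h i : Kˣ) : K)) hG

theorem exists_prime_forall_dvd_of_forall_dvd_expandVars [∀ i, HasEnoughRootsOfUnity K (w i)]
    {G : MvPolynomial ι K} (hG : Prime G) {S : Set (MvPolynomial ι K)}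
    (hS : ∀ B ∈ S, G ∣ expandVars w B) :
    ∃ q, Prime q ∧ ∀ B ∈ S, q ∣ B := by
  obtain ⟨M, hM⟩ := exists_expandVars_eq_of_forall_scaleVars_eq (w := w) fun h ↦
    scaleVars_orbitProd h G
  have hM0 : M ≠ 0 := by
    rintro rfl
    exact orbitProd_ne_zero hG.ne_zero (by rw [← hM, map_zero])
  have hMu : ¬ IsUnit M := fun hu ↦
    hG.not_isUnit (isUnit_of_dvd_unit (dvd_orbitProd G) (hM ▸ hu.map (expandVars w)))
  obtain ⟨q, hq, hqM⟩ := WfDvdMonoid.exists_irreducible_factor hMu hM0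
  refine ⟨q, hq.prime, fun B hB ↦ ?_⟩
  obtain ⟨n, hn⟩ := orbitProd_dvd_pow (hS B hB)
  rw [← hM, ← map_pow, expandVars_dvd_expandVars_iff] at hn
  exact hq.prime.dvd_of_dvd_pow (hqM.trans hn)

end OrbitProd

theorem _root_.Derivation.dvd_apply_of_mul_self_dvd {A : Type*} [CommSemiring A] [Algebra R A]
    (D : Derivation R A A) {a b : A} (h : a * a ∣ b) : a ∣ D b := by
  obtain ⟨c, rfl⟩ := h
  rw [mul_assoc, D.leibniz, smul_eq_mul, smul_eq_mul]
  exact dvd_add (dvd_mul_right _ _) (dvd_mul_of_dvd_left (dvd_mul_right _ _) _)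

variable {K : Type*} [Field K] {w : ι → ℕ}

theorem _root_.Prime.dvd_expandVars_pderiv (hw : ∀ i, (w i : K) ≠ 0) {G F : MvPolynomial ι K}
    (hG : Prime G) (hGG : G * G ∣ expandVars w F) {i : ι} (hX : ¬ X i ∣ F) :
    G ∣ expandVars w (pderiv i F) := by
  have hw₀ (j : ι) : w j ≠ 0 := fun h ↦ hw j (by simp [h])
  have hGX : ¬ G ∣ X i := fun h ↦ hX <| (X_dvd_expandVars_iff hw₀).mp <|
    (hG.irreducible.dvd_symm (X_prime.irreducible) h).trans (dvd_of_mul_left_dvd hGG)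
  have hGw : ¬ G ∣ (w i : MvPolynomial ι K) := fun h ↦ hG.not_isUnit <| isUnit_of_dvd_unit h <|
    by simpa using (isUnit_iff_ne_zero.mpr (hw i)).map (C : K →+* MvPolynomial ι K)
  have := (pderiv i).dvd_apply_of_mul_self_dvd hGG
  rw [pderiv_expandVars] at this
  exact ((hG.dvd_or_dvd this).resolve_right fun h ↦
    (hG.dvd_or_dvd h).elim hGw fun h ↦ hGX (hG.dvd_of_dvd_pow h))

theorem _root_.Squarefree.expandVars [Finite ι] [IsAlgClosed K] (hw : ∀ i, (w i : K) ≠ 0)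
    {F : MvPolynomial ι K} (hF : Squarefree F) (hX : ∀ i, ¬ X i ∣ F) :
    Squarefree (expandVars w F) := by
  have (i : ι) : NeZero (w i : K) := ⟨hw i⟩
  have hw₀ (i : ι) : w i ≠ 0 := fun h ↦ hw i (by simp [h])
  have (i : ι) : NeZero (w i) := ⟨hw₀ i⟩
  rw [squarefree_iff_no_irreducibles ((map_ne_zero_iff _ (expandVars_injective hw₀)).mpr
    hF.ne_zero)]
  intro G hG hGG
  obtain ⟨q, hq, hqS⟩ := exists_prime_forall_dvd_of_forall_dvd_expandVars (w := w) hG.prime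
    (S := insert F (Set.range fun i ↦ pderiv i F)) <| by
      rintro B (rfl | ⟨i, rfl⟩)
      exacts [dvd_of_mul_left_dvd hGG, hG.prime.dvd_expandVars_pderiv hw hGG (hX i)]
  obtain ⟨i, hi⟩ := hF.exists_not_dvd_pderiv hq (hqS F (Set.mem_insert _ _))
  exact hi (hqS _ (Set.mem_insert_of_mem _ ⟨i, rfl⟩))

end MvPolynomial

open MvPolynomial

theorem stmt3_general {K : Type*} [Field K] [IsAlgClosed K]
    (F : MvPolynomial (Fin 2) K) (hsf : Squarefree F)
    (hX : ¬ (MvPolynomial.X 0 ∣ F)) (hY : ¬ (MvPolynomial.X 1 ∣ F))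
    (σ1 σ2 : ℕ)
    (hp1 : ¬ (ringChar K ∣ σ1)) (hp2 : ¬ (ringChar K ∣ σ2)) :
    Squarefree
      (MvPolynomial.aeval ![MvPolynomial.X 0 ^ σ1, MvPolynomial.X 1 ^ σ2] F :
        MvPolynomial (Fin 2) K) := by
  have hw : ∀ i, ((![σ1, σ2] i : ℕ) : K) ≠ 0 := by
    intro i
    fin_cases i
    exacts [mt (ringChar.spec K σ1).mp hp1, mt (ringChar.spec K σ2).mp hp2]
  have hXF : ∀ i, ¬ X i ∣ F := by
    intro i
    fin_cases i
    exacts [hX, hY]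
  have : (aeval ![X 0 ^ σ1, X 1 ^ σ2] : MvPolynomial (Fin 2) K →ₐ[K] _) =
      expandVars ![σ1, σ2] := by
    ext i
    fin_cases i <;> simp
  rw [this]
  exact hsf.expandVars hw hXF

/-- **Lemma.** Let `K` be an algebraically closed field of characteristic `p ≥ 0`, let
`F ∈ K[X,Y]` be squarefree, divisible by neither `X` nor `Y`, and let `σ1, σ2` be positive
integers not divisible by `p`.  Then `F(X^σ1, Y^σ2)` is squarefree. -/
theorem stmt3 {K : Type*} [Field K] [IsAlgClosed K]
    (F : MvPolynomial (Fin 2) K) (hsf : Squarefree F)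
    (hX : ¬ (MvPolynomial.X 0 ∣ F)) (hY : ¬ (MvPolynomial.X 1 ∣ F))
    (σ1 σ2 : ℕ) (h1 : 0 < σ1) (h2 : 0 < σ2)
    (hp1 : ¬ (ringChar K ∣ σ1)) (hp2 : ¬ (ringChar K ∣ σ2)) :
    Squarefree
      (MvPolynomial.aeval ![MvPolynomial.X 0 ^ σ1, MvPolynomial.X 1 ^ σ2] F :
        MvPolynomial (Fin 2) K) :=
  stmt3_general F hsf hX hY σ1 σ2 hp1 hp2
end

section
/- Let a, b ∈ ℕ with gcd(a,b) = 1 (so (a,b) ≠ (0,0)), and let P ∈ K[s] be a polynomial with P(0) ≠ 0 and k := deg(P) ≥ 1. Then the polynomial P(X^a·Y^b) ∈ K[X,Y] is a nonzero scalar multiple of a power of an irreducible polynomial of K[X,Y] if and only if P = ν·(s−ξ)^k for some ν, ξ ∈ K^×; in that case P(X^a·Y^b) = ν·(X^a·Y^b − ξ)^k with X^a·Y^b − ξ irreducible. -/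
/-!
The key fact is that `X^a Y^b - ξ` is prime for coprime `a, b` and `ξ ≠ 0`. Both it and
`X - ξ` are coprime to every monomial (their value at `0` is `-ξ ≠ 0`), so each is prime in
`K[X,Y]` iff it is prime in its localization at the monomials, the Laurent ring `K[ℤ²]`.
There a unimodular change of exponents `(1,0) ↦ (a,b)` is a ring automorphism sending
`X - ξ` to `X^a Y^b - ξ`.

Conversely, if `P(X^a Y^b) = c G^n` with `G` irreducible, every root `r` of `P` gives a prime
factor `X^a Y^b - r` of `G^n`, hence an associate of `G`; distinct roots give non-associated
factors, so `P` has a single root.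
-/

open Polynomial

noncomputable section

section LocalizationPrime

variable {R S : Type*} [CommRing R] [CommRing S] [DecompositionMonoid R] {φ : R →+* S}
  {M : Submonoid R}

theorem map_dvd_iff_of_mul_eq (hφ : Function.Injective φ) (hunit : ∀ m ∈ M, IsUnit (φ m))
    (hsurj : ∀ s, ∃ m ∈ M, ∃ r, φ m * s = φ r) {f : R} (hf : ∀ m ∈ M, IsRelPrime f m)
    {m r : R} {s : S} (hm : m ∈ M) (h : φ m * s = φ r) : φ f ∣ s ↔ f ∣ r := by
  rw [← (hunit m hm).dvd_mul_left, h]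
  refine ⟨fun ⟨t, ht⟩ => ?_, map_dvd φ⟩
  obtain ⟨m', hm', t', ht'⟩ := hsurj t
  have : m' * r = f * t' := hφ (by rw [map_mul, map_mul, ht, ← ht']; ring)
  exact (hf m' hm').dvd_of_dvd_mul_left ⟨t', this⟩

theorem prime_map_iff (hφ : Function.Injective φ) (hunit : ∀ m ∈ M, IsUnit (φ m))
    (hsurj : ∀ s, ∃ m ∈ M, ∃ r, φ m * s = φ r) {f : R}
    (hf : ∀ m ∈ M, IsRelPrime f m) : Prime (φ f) ↔ Prime f := by
  have hdvd {m r : R} {s : S} (hm : m ∈ M) (h : φ m * s = φ r) : φ f ∣ s ↔ f ∣ r :=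
    map_dvd_iff_of_mul_eq hφ hunit hsurj hf hm h
  have hdvd_map (x : R) : φ f ∣ φ x ↔ f ∣ x := hdvd M.one_mem (by rw [map_one, one_mul])
  refine ⟨fun hp => ⟨fun h0 => hp.ne_zero (by rw [h0, map_zero]),
    fun hu => hp.not_isUnit (hu.map φ), fun x y hxy => ?_⟩,
    fun hp => ⟨fun h0 => hp.ne_zero (hφ (by rw [h0, map_zero])), fun hu => ?_,
      fun x y hxy => ?_⟩⟩
  · rw [← hdvd_map, ← hdvd_map]
    exact hp.dvd_or_dvd (by rw [← map_mul]; exact map_dvd φ hxy)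
  · rw [isUnit_iff_dvd_one, ← map_one φ, hdvd_map] at hu
    exact hp.not_isUnit (isUnit_of_dvd_one hu)
  · obtain ⟨mx, hmx, x', hx⟩ := hsurj x
    obtain ⟨my, hmy, y', hy⟩ := hsurj y
    rw [hdvd hmx hx, hdvd hmy hy]
    refine hp.dvd_or_dvd ((hdvd (M.mul_mem hmx hmy) ?_).mp hxy)
    rw [map_mul, map_mul, ← hx, ← hy]; ring

end LocalizationPrime

theorem Int.exists_addEquiv_prod_apply_one_zero {a b : ℤ} (h : IsCoprime a b) :
    ∃ e : ℤ × ℤ ≃+ ℤ × ℤ, e (1, 0) = (a, b) := by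
  obtain ⟨u, v, huv⟩ := h
  refine ⟨{ toFun p := (a * p.1 - v * p.2, b * p.1 + u * p.2)
            invFun p := (u * p.1 + v * p.2, -b * p.1 + a * p.2)
            left_inv p := ?_, right_inv p := ?_, map_add' p q := ?_ }, ?_⟩
  · ext
    · linear_combination p.1 * huv
    · linear_combination p.2 * huv
  · ext
    · linear_combination p.1 * huv
    · linear_combination p.2 * huv
  · ext <;> dsimp <;> ring
  · simp

namespace MvPolynomial

theorem prime_X_zero_sub_C {R : Type*} [CommRing R] [IsDomain R] {n : ℕ} (ξ : R) :
    Prime (X 0 - C ξ : MvPolynomial (Fin (n + 1)) R) := by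
  rw [← MulEquiv.prime_iff (finSuccEquiv R n), map_sub, finSuccEquiv_X_zero,
    finSuccEquiv_apply, eval₂Hom_C, RingHom.coe_comp, Function.comp_apply]
  exact Polynomial.prime_X_sub_C _

theorem isRelPrime_of_mem_closure_X {σ K : Type*} [Field K] {p : MvPolynomial σ K}
    (hp : eval 0 p ≠ 0) {m : MvPolynomial σ K} (hm : m ∈ Submonoid.closure (Set.range X)) :
    IsRelPrime p m := by
  induction hm using Submonoid.closure_induction with
  | mem _ hX =>
    obtain ⟨i, rfl⟩ := hX
    refine ((X_prime.irreducible.isRelPrime_iff_not_dvd).mpr fun ⟨q, hq⟩ => hp ?_).symm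
    rw [hq, map_mul, eval_X, Pi.zero_apply, zero_mul]
  | one => exact isRelPrime_one_right
  | mul _ _ _ _ hx hy => exact hx.mul_right hy

variable {K : Type*} [CommRing K]

def exponentToIntPair : (Fin 2 →₀ ℕ) →+ ℤ × ℤ :=
  ((Int.ofNatHom : ℕ →+* ℤ).toAddMonoidHom.comp (Finsupp.applyAddHom 0)).prod
    ((Int.ofNatHom : ℕ →+* ℤ).toAddMonoidHom.comp (Finsupp.applyAddHom 1))

theorem exponentToIntPair_injective : Function.Injective exponentToIntPair := by
  intro d e h
  simp only [exponentToIntPair, AddMonoidHom.prod_apply, Prod.ext_iff] at h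
  ext i
  fin_cases i
  · exact Int.ofNat_inj.mp h.1
  · exact Int.ofNat_inj.mp h.2

def toLaurent₂ : MvPolynomial (Fin 2) K →ₐ[K] AddMonoidAlgebra K (ℤ × ℤ) :=
  AddMonoidAlgebra.mapDomainAlgHom K K exponentToIntPair

theorem toLaurent₂_injective : Function.Injective (toLaurent₂ (K := K)) :=
  AddMonoidAlgebra.mapDomain_injective exponentToIntPair_injective

theorem toLaurent₂_monomial (d : Fin 2 →₀ ℕ) (c : K) :
    toLaurent₂ (monomial d c) = AddMonoidAlgebra.single ((d 0 : ℤ), (d 1 : ℤ)) c := by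
  simp [toLaurent₂, monomial, exponentToIntPair]

theorem toLaurent₂_X_pow_mul_X_pow (i j : ℕ) :
    toLaurent₂ (X 0 ^ i * X 1 ^ j : MvPolynomial (Fin 2) K) =
      AddMonoidAlgebra.single ((i : ℤ), (j : ℤ)) 1 := by
  rw [X_pow_eq_monomial, X_pow_eq_monomial, monomial_mul, one_mul, toLaurent₂_monomial]
  simp

theorem isUnit_toLaurent₂_of_mem_closure_X {m : MvPolynomial (Fin 2) K}
    (hm : m ∈ Submonoid.closure (Set.range X)) : IsUnit (toLaurent₂ m) := by
  induction hm using Submonoid.closure_induction with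
  | mem _ hX =>
    obtain ⟨i, rfl⟩ := hX
    rw [X, toLaurent₂_monomial]
    exact (Group.isUnit (Multiplicative.ofAdd _)).map (AddMonoidAlgebra.of K (ℤ × ℤ))
  | one => rw [map_one]; exact isUnit_one
  | mul _ _ _ _ hx hy => rw [map_mul]; exact hx.mul hy

theorem exists_mul_toLaurent₂_eq (s : AddMonoidAlgebra K (ℤ × ℤ)) :
    ∃ m ∈ Submonoid.closure (Set.range X), ∃ r,
      toLaurent₂ m * s = toLaurent₂ (r : MvPolynomial (Fin 2) K) := by
  induction s using AddMonoidAlgebra.induction_on with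
  | of w =>
    refine ⟨X 0 ^ (-w.1).toNat * X 1 ^ (-w.2).toNat, ?_, X 0 ^ w.1.toNat * X 1 ^ w.2.toNat, ?_⟩
    · exact mul_mem (pow_mem (Submonoid.subset_closure (Set.mem_range_self 0)) _)
        (pow_mem (Submonoid.subset_closure (Set.mem_range_self 1)) _)
    · rw [toLaurent₂_X_pow_mul_X_pow, toLaurent₂_X_pow_mul_X_pow, AddMonoidAlgebra.of_apply,
        AddMonoidAlgebra.single_mul_single, one_mul]
      congr 1
      ext <;> simp <;> omega
  | add x y hx hy =>
    obtain ⟨mx, hmx, x', hx⟩ := hx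
    obtain ⟨my, hmy, y', hy⟩ := hy
    refine ⟨mx * my, mul_mem hmx hmy, my * x' + mx * y', ?_⟩
    rw [map_add, map_mul, map_mul, map_mul, ← hx, ← hy]; ring
  | smul c x hx =>
    obtain ⟨m, hm, r, h⟩ := hx
    exact ⟨m, hm, c • r, by rw [map_smul, ← h, mul_smul_comm]⟩

theorem prime_toLaurent₂_iff {K : Type*} [Field K] {p : MvPolynomial (Fin 2) K}
    (hp : eval 0 p ≠ 0) : Prime (toLaurent₂ p) ↔ Prime p :=
  prime_map_iff (M := Submonoid.closure (Set.range X)) toLaurent₂_injective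
    (fun _ => isUnit_toLaurent₂_of_mem_closure_X) exists_mul_toLaurent₂_eq
    (fun _ => isRelPrime_of_mem_closure_X hp)

theorem prime_X_pow_mul_X_pow_sub_C {K : Type*} [Field K] {a b : ℕ} (hab : a.Coprime b)
    {ξ : K} (hξ : ξ ≠ 0) : Prime (X 0 ^ a * X 1 ^ b - C ξ : MvPolynomial (Fin 2) K) := by
  have hab0 : (0 : K) ^ a * 0 ^ b = 0 := by
    rcases Nat.eq_zero_or_pos a with rfl | ha
    · rw [(Nat.coprime_zero_left b).mp hab, pow_one, mul_zero]
    · rw [zero_pow ha.ne', zero_mul]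
  obtain ⟨e, he⟩ := Int.exists_addEquiv_prod_apply_one_zero (Nat.isCoprime_iff_coprime.mpr hab)
  have hmap : toLaurent₂ (X 0 ^ a * X 1 ^ b - C ξ) =
      AddMonoidAlgebra.domCongr K K e (toLaurent₂ (X 0 - C ξ)) := by
    simp only [map_sub, ← algebraMap_eq, AlgHom.commutes, AlgEquiv.commutes]
    rw [toLaurent₂_X_pow_mul_X_pow, X, toLaurent₂_monomial, AddMonoidAlgebra.domCongr_single]
    simp [he]
  rw [← prime_toLaurent₂_iff (by simp [hab0, hξ]), hmap, MulEquiv.prime_iff,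
    prime_toLaurent₂_iff (by simp [hξ])]
  exact prime_X_zero_sub_C ξ

end MvPolynomial

theorem eq_of_sub_algebraMap_dvd_sub_algebraMap {K A : Type*} [Field K] [CommRing A]
    [Algebra K A] {m : A} {r r' : K} (hm : ¬IsUnit (m - algebraMap K A r))
    (h : m - algebraMap K A r ∣ m - algebraMap K A r') : r = r' := by
  by_contra hne
  have hdvd : m - algebraMap K A r ∣ algebraMap K A (r' - r) := by
    simpa only [sub_sub_sub_cancel_left, map_sub] using dvd_sub dvd_rfl h
  exact hm (isUnit_of_dvd_unit hdvd ((sub_ne_zero.mpr (Ne.symm hne)).isUnit.map _))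

theorem eq_C_mul_X_sub_C_pow_of_aeval_eq_C_mul_pow {K : Type*} [Field K] [IsAlgClosed K]
    {a b : ℕ} (hab : a.Coprime b) {P : K[X]} (hP0 : P.eval 0 ≠ 0) (hk : 1 ≤ P.natDegree)
    {c : K} {G : MvPolynomial (Fin 2) K} {n : ℕ} (hc : c ≠ 0) (hG : Irreducible G)
    (h : aeval (MvPolynomial.X 0 ^ a * MvPolynomial.X 1 ^ b : MvPolynomial (Fin 2) K) P =
      MvPolynomial.C c * G ^ n) :
    ∃ ν ξ : K, ν ≠ 0 ∧ ξ ≠ 0 ∧ P = C ν * (X - C ξ) ^ P.natDegree := by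
  have hroot_ne {r : K} (hr : r ∈ P.roots) : r ≠ 0 := by
    rintro rfl; exact hP0 (isRoot_of_mem_roots hr)
  have hassoc {r : K} (hr : r ∈ P.roots) :
      Associated (MvPolynomial.X 0 ^ a * MvPolynomial.X 1 ^ b - MvPolynomial.C r) G := by
    have hprime := MvPolynomial.prime_X_pow_mul_X_pow_sub_C hab (hroot_ne hr)
    have hdvd := map_dvd (aeval (MvPolynomial.X 0 ^ a * MvPolynomial.X 1 ^ b :
      MvPolynomial (Fin 2) K)) (dvd_iff_isRoot.mpr (isRoot_of_mem_roots hr))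
    rw [h, map_sub, aeval_X, aeval_C, MvPolynomial.algebraMap_eq,
      (hc.isUnit.map MvPolynomial.C).dvd_mul_left] at hdvd
    exact hprime.irreducible.associated_of_dvd hG (hprime.dvd_of_dvd_pow hdvd)
  obtain ⟨ξ, hξ⟩ := IsAlgClosed.exists_root P (natDegree_pos_iff_degree_pos.mp hk).ne'
  have hξ : ξ ∈ P.roots := (mem_roots (ne_zero_of_natDegree_gt hk)).mpr hξ
  have hroots : P.roots = Multiset.replicate P.natDegree ξ := by
    refine Multiset.eq_replicate.mpr ⟨(IsAlgClosed.splits P).natDegree_eq_card_roots.symm, ?_⟩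
    intro r hr
    exact eq_of_sub_algebraMap_dvd_sub_algebraMap
      (MvPolynomial.prime_X_pow_mul_X_pow_sub_C hab (hroot_ne hr)).not_isUnit
      ((hassoc hr).trans (hassoc hξ).symm).dvd
  refine ⟨P.leadingCoeff, ξ, leadingCoeff_ne_zero.mpr (ne_zero_of_natDegree_gt hk),
    hroot_ne hξ, ?_⟩
  conv_lhs => rw [(IsAlgClosed.splits P).eq_prod_roots, hroots, Multiset.map_replicate,
    Multiset.prod_replicate]

/-- **Lemma.** Let `K` be an algebraically closed field, `a, b ∈ ℕ` coprime, and
`P ∈ K[s]` with `P(0) ≠ 0` and `k = deg P ≥ 1`.  Then `P(X^a·Y^b) ∈ K[X,Y]` is a nonzero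
scalar multiple of a power of an irreducible polynomial if and only if
`P = ν·(s−ξ)^k` for some `ν, ξ ∈ K^×`; and in that case
`P(X^a·Y^b) = ν·(X^a·Y^b − ξ)^k` with `X^a·Y^b − ξ` irreducible. -/
theorem stmt15 {K : Type*} [Field K] [IsAlgClosed K]
    (a b : ℕ) (hab : Nat.gcd a b = 1) (P : Polynomial K)
    (hP0 : P.eval 0 ≠ 0) (hk : 1 ≤ P.natDegree) :
    ((∃ (c : K) (G : MvPolynomial (Fin 2) K) (n : ℕ), c ≠ 0 ∧ Irreducible G ∧
        Polynomial.aeval (MvPolynomial.X 0 ^ a * MvPolynomial.X 1 ^ b :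
            MvPolynomial (Fin 2) K) P = MvPolynomial.C c * G ^ n) ↔
      ∃ ν ξ : K, ν ≠ 0 ∧ ξ ≠ 0 ∧
        P = Polynomial.C ν * (Polynomial.X - Polynomial.C ξ) ^ P.natDegree) ∧
    ∀ ν ξ : K, ν ≠ 0 → ξ ≠ 0 →
      P = Polynomial.C ν * (Polynomial.X - Polynomial.C ξ) ^ P.natDegree →
      Polynomial.aeval (MvPolynomial.X 0 ^ a * MvPolynomial.X 1 ^ b :
            MvPolynomial (Fin 2) K) P =
          MvPolynomial.C ν *
            (MvPolynomial.X 0 ^ a * MvPolynomial.X 1 ^ b - MvPolynomial.C ξ) ^ P.natDegree ∧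
        Irreducible
          (MvPolynomial.X 0 ^ a * MvPolynomial.X 1 ^ b - MvPolynomial.C ξ :
            MvPolynomial (Fin 2) K) := by
  have hprime {ξ : K} (hξ : ξ ≠ 0) := MvPolynomial.prime_X_pow_mul_X_pow_sub_C hab hξ
  have haeval {ν ξ : K} (hP : P = C ν * (X - C ξ) ^ P.natDegree) :
      Polynomial.aeval (MvPolynomial.X 0 ^ a * MvPolynomial.X 1 ^ b :
          MvPolynomial (Fin 2) K) P =
        MvPolynomial.C ν *
          (MvPolynomial.X 0 ^ a * MvPolynomial.X 1 ^ b - MvPolynomial.C ξ) ^ P.natDegree := by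
    conv_lhs => rw [hP]
    simp [MvPolynomial.algebraMap_eq]
  refine ⟨⟨fun ⟨c, G, n, hc, hG, h⟩ =>
      eq_C_mul_X_sub_C_pow_of_aeval_eq_C_mul_pow hab hP0 hk hc hG h,
    fun ⟨ν, ξ, hν, hξ, hP⟩ => ⟨ν, _, _, hν, (hprime hξ).irreducible, haeval hP⟩⟩,
    fun _ _ _ hξ hP => ⟨haeval hP, (hprime hξ).irreducible⟩⟩
end
end

section
/- Let 𝒫 ⊂ K[t] be a finite set of nonconstant, pairwise coprime polynomials, let d_p, e_p ∈ ℤ for each p ∈ 𝒫, let α, β ∈ K^×, and set f := α·∏_{p∈𝒫} p^{d_p} and g := β·∏_{p∈𝒫} p^{e_p} ∈ K(t). Then the Minkowski sum identity Σ_{v∈K} R_{(ord_v(f), ord_v(g))} = Σ_{p∈𝒫} deg(p)·R_{(d_p, e_p)} holds (all but finitely many summands on the left equal {(0,0)}), and moreover (ord_∞(f), ord_∞(g)) = (−Σ_{p∈𝒫} d_p·deg(p), −Σ_{p∈𝒫} e_p·deg(p)). -/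
open Polynomial Pointwise

noncomputable section

variable {K : Type*} [Field K]

/-- Order of vanishing of a rational function at a point `v ∈ K`. -/
def ordAt (v : K) (h : RatFunc K) : ℤ :=
  (h.num.rootMultiplicity v : ℤ) - (h.denom.rootMultiplicity v : ℤ)

/-- Order of vanishing of a rational function at infinity. -/
def ordInf (h : RatFunc K) : ℤ :=
  (h.denom.natDegree : ℤ) - (h.num.natDegree : ℤ)

/-- The height of a rational function. -/
def eta (h : RatFunc K) : ℕ := max h.num.natDegree h.denom.natDegree

/-- A rational function is constant if it comes from `K`. -/
def IsConst (h : RatFunc K) : Prop := ∃ a : K, h = RatFunc.C a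

/-- `E ∈ K[X,Y]` is an implicit equation for the parametrization `(f,g)`. -/
def IsImplicitEq (f g : RatFunc K) (E : MvPolynomial (Fin 2) K) : Prop :=
  Irreducible E ∧ MvPolynomial.aeval ![f, g] E = 0

/-- Newton polygon of a bivariate polynomial: convex hull of its exponents. -/
def newton (E : MvPolynomial (Fin 2) K) : Set (ℝ × ℝ) :=
  convexHull ℝ ((fun d : Fin 2 →₀ ℕ => ((d 0 : ℝ), (d 1 : ℝ))) '' ↑E.support)

/-- The triangle `R_(m,n)` associated to a vector `(m,n) ∈ ℤ²`. -/
def Rtri (m n : ℤ) : Set (ℝ × ℝ) :=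
  if 0 ≤ m * n then
    convexHull ℝ {((0 : ℝ), (0 : ℝ)), (-(n : ℝ), 0), (0, -(m : ℝ))}
  else
    convexHull ℝ {((-(n : ℝ)), (-(m : ℝ))), (-(n : ℝ), 0), (0, -(m : ℝ))}

/-- Degree of the parametrization `(f,g)`, i.e. `[K(t) : K(f,g)]`. -/
def parDeg (f g : RatFunc K) : ℕ :=
  Module.finrank (IntermediateField.adjoin K {f, g}) (RatFunc K)

/-- Support function of a subset of `ℝ²`. -/
def supFn (Q : Set (ℝ × ℝ)) (w : ℝ × ℝ) : ℝ :=
  sSup ((fun u => w.1 * u.1 + w.2 * u.2) '' Q)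

/-!
`ordAt v` and `RatFunc.intDegree` are additive on nonzero rational functions, so
`ord_v f = Σ_p d_p · mult_v p` and `ord_∞ f = -Σ_p d_p · deg p`. As the `p` are pairwise coprime,
at each `v` at most one of them vanishes, hence `R_(ord_v f, ord_v g) = mult_v p • R_(d_p, e_p)`
for that `p`. Since `R_(d_p, e_p)` is convex, `a • R + b • R = (a + b) • R`, and summing over `v`
leaves `(Σ_v mult_v p) • R_(d_p, e_p) = deg p • R_(d_p, e_p)`, `K` being algebraically closed.
-/

section MapMul

variable {G₀ A ι : Type*} [CommGroupWithZero G₀] [AddCommGroup A] {D : G₀ → A}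

theorem map_one_of_map_mul (hD : ∀ {x y : G₀}, x ≠ 0 → y ≠ 0 → D (x * y) = D x + D y) :
    D 1 = 0 := by
  simpa using hD one_ne_zero one_ne_zero

theorem map_zpow_of_map_mul (hD : ∀ {x y : G₀}, x ≠ 0 → y ≠ 0 → D (x * y) = D x + D y)
    {x : G₀} (hx : x ≠ 0) (n : ℤ) : D (x ^ n) = n • D x := by
  let φ : G₀ˣ →* Multiplicative A :=
    { toFun := fun u => .ofAdd (D u)
      map_one' := by simp [map_one_of_map_mul hD]
      map_mul' := fun u v => by simp [hD u.ne_zero v.ne_zero] }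
  simpa [φ] using congrArg Multiplicative.toAdd (map_zpow φ (Units.mk0 x hx) n)

theorem map_prod_of_map_mul (hD : ∀ {x y : G₀}, x ≠ 0 → y ≠ 0 → D (x * y) = D x + D y)
    {s : Finset ι} {x : ι → G₀} (hx : ∀ i ∈ s, x i ≠ 0) :
    D (∏ i ∈ s, x i) = ∑ i ∈ s, D (x i) := by
  classical
  induction s using Finset.cons_induction with
  | empty => simpa using map_one_of_map_mul hD
  | cons a s ha ih =>
    rw [Finset.prod_cons, Finset.sum_cons, hD (hx a (s.mem_cons_self a))
      (Finset.prod_ne_zero_iff.mpr fun i hi => hx i (Finset.mem_cons_of_mem hi)),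
      ih fun i hi => hx i (Finset.mem_cons_of_mem hi)]

theorem map_mul_prod_zpow_of_map_mul
    (hD : ∀ {x y : G₀}, x ≠ 0 → y ≠ 0 → D (x * y) = D x + D y)
    {c : G₀} (hc : c ≠ 0) {s : Finset ι} {x : ι → G₀} (hx : ∀ i ∈ s, x i ≠ 0) (n : ι → ℤ) :
    D (c * ∏ i ∈ s, x i ^ n i) = D c + ∑ i ∈ s, n i • D (x i) := by
  rw [hD hc (Finset.prod_ne_zero_iff.mpr fun i hi => zpow_ne_zero _ (hx i hi)),
    map_prod_of_map_mul hD fun i hi => zpow_ne_zero _ (hx i hi)]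
  exact congrArg _ (Finset.sum_congr rfl fun i hi => map_zpow_of_map_mul hD (hx i hi) (n i))

end MapMul

def Convex.natCastSMulHom {E : Type*} [AddCommGroup E] [Module ℝ E] {Q : Set E}
    (hQ : Convex ℝ Q) (hne : Q.Nonempty) : ℕ →+ Set E where
  toFun k := (k : ℝ) • Q
  map_zero' := by simpa using Set.zero_smul_set hne
  map_add' a b := by simpa using hQ.add_smul a.cast_nonneg b.cast_nonneg

theorem Convex.finsum_natCast_smul {α E : Type*} [AddCommGroup E] [Module ℝ E] {Q : Set E}
    (hQ : Convex ℝ Q) (hne : Q.Nonempty) {m : α → ℕ} (hm : (Function.support m).Finite) :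
    ∑ᶠ a, (m a : ℝ) • Q = ((∑ᶠ a, m a : ℕ) : ℝ) • Q :=
  (map_finsum (hQ.natCastSMulHom hne) hm).symm

theorem support_natCast_smul_subset {α E : Type*} [AddCommGroup E] [Module ℝ E] {Q : Set E}
    (hne : Q.Nonempty) (m : α → ℕ) :
    (Function.support fun a => (m a : ℝ) • Q) ⊆ Function.support m := fun a ha h =>
  ha (by simp [h, Set.zero_smul_set hne])

theorem map_sum_of_pairwise_eq_zero_or {ι M N : Type*} [AddCommMonoid M] [AddCommMonoid N]
    {F : M → N} (hF : F 0 = 0) {s : Finset ι} {x : ι → M}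
    (hx : ∀ i ∈ s, ∀ j ∈ s, i ≠ j → x i = 0 ∨ x j = 0) :
    F (∑ i ∈ s, x i) = ∑ i ∈ s, F (x i) := by
  by_cases h : ∃ i ∈ s, x i ≠ 0
  · obtain ⟨i, hi, hxi⟩ := h
    have hothers : ∀ j ∈ s, j ≠ i → x j = 0 := fun j hj hji =>
      (hx j hj i hi hji).resolve_right hxi
    rw [Finset.sum_eq_single_of_mem i hi hothers, Finset.sum_eq_single_of_mem i hi
      fun j hj hji => by rw [hothers j hj hji, hF]]
  · push Not at h
    rw [Finset.sum_eq_zero h, hF, Finset.sum_eq_zero fun i hi => by rw [h i hi, hF]]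

theorem ordAt_mul (v : K) {x y : RatFunc K} (hx : x ≠ 0) (hy : y ≠ 0) :
    ordAt v (x * y) = ordAt v x + ordAt v y := by
  have h := congrArg (rootMultiplicity v) (RatFunc.num_denom_mul x y)
  have hxy : (x * y).num ≠ 0 := RatFunc.num_ne_zero (mul_ne_zero hx hy)
  have hden : x.denom * y.denom ≠ 0 := mul_ne_zero x.denom_ne_zero y.denom_ne_zero
  have hnum : x.num * y.num ≠ 0 := mul_ne_zero (RatFunc.num_ne_zero hx) (RatFunc.num_ne_zero hy)
  rw [rootMultiplicity_mul (mul_ne_zero hxy hden), rootMultiplicity_mul hden,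
    rootMultiplicity_mul (mul_ne_zero hnum (x * y).denom_ne_zero),
    rootMultiplicity_mul hnum] at h
  unfold ordAt
  omega

theorem ordAt_C (v a : K) : ordAt v (RatFunc.C a) = 0 := by
  simp [ordAt, rootMultiplicity_C]

theorem ordAt_algebraMap (v : K) (p : K[X]) :
    ordAt v (algebraMap K[X] (RatFunc K) p) = p.rootMultiplicity v := by
  simp [ordAt]

theorem ordInf_eq_neg_intDegree (h : RatFunc K) : ordInf h = -h.intDegree := by
  simp [ordInf, RatFunc.intDegree]

section Factorization

variable {ι : Type*} {s : Finset ι} {P : ι → K[X]} {a : K}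

theorem ordAt_C_mul_prod_zpow (ha : a ≠ 0) (hP : ∀ i ∈ s, P i ≠ 0) (n : ι → ℤ) (v : K) :
    ordAt v (RatFunc.C a * ∏ i ∈ s, algebraMap K[X] (RatFunc K) (P i) ^ n i) =
      ∑ i ∈ s, n i * (P i).rootMultiplicity v := by
  rw [map_mul_prod_zpow_of_map_mul (ordAt_mul v) (by simpa using ha)
    (fun i hi => RatFunc.algebraMap_ne_zero (hP i hi)), ordAt_C, zero_add]
  simp [ordAt_algebraMap]

theorem intDegree_C_mul_prod_zpow (ha : a ≠ 0) (hP : ∀ i ∈ s, P i ≠ 0) (n : ι → ℤ) :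
    (RatFunc.C a * ∏ i ∈ s, algebraMap K[X] (RatFunc K) (P i) ^ n i).intDegree =
      ∑ i ∈ s, n i * (P i).natDegree := by
  rw [map_mul_prod_zpow_of_map_mul RatFunc.intDegree_mul (by simpa using ha)
    (fun i hi => RatFunc.algebraMap_ne_zero (hP i hi)), RatFunc.intDegree_C, zero_add]
  simp [RatFunc.intDegree_polynomial]

end Factorization

theorem Rtri_zero_zero : Rtri 0 0 = 0 := by
  simp only [Rtri, Int.cast_zero, neg_zero, mul_zero, le_refl, if_true, Set.mem_singleton_iff,
    Set.insert_eq_of_mem, convexHull_singleton]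
  rfl

theorem convex_Rtri (m n : ℤ) : Convex ℝ (Rtri m n) := by
  unfold Rtri; split_ifs <;> exact convex_convexHull ℝ _

theorem Rtri_nonempty (m n : ℤ) : (Rtri m n).Nonempty := by
  unfold Rtri; split_ifs <;> exact ⟨_, subset_convexHull ℝ _ (Set.mem_insert _ _)⟩

theorem Rtri_nsmul (k : ℕ) (m n : ℤ) : Rtri (k • m) (k • n) = (k : ℝ) • Rtri m n := by
  obtain rfl | hk := k.eq_zero_or_pos
  · simp [Rtri_zero_zero, Set.zero_smul_set (Rtri_nonempty m n)]
  have hsign : 0 ≤ (k • m) * (k • n) ↔ 0 ≤ m * n := by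
    rw [nsmul_eq_mul, nsmul_eq_mul, mul_mul_mul_comm]
    exact mul_nonneg_iff_of_pos_left (by positivity)
  unfold Rtri
  simp only [hsign]
  split_ifs <;>
  · rw [← convexHull_smul]
    simp [Set.smul_set_insert, Set.smul_set_singleton]

theorem uncurry_Rtri_sum_nsmul {ι : Type*} {s : Finset ι} {k : ι → ℕ}
    (hk : ∀ i ∈ s, ∀ j ∈ s, i ≠ j → k i = 0 ∨ k j = 0) (d e : ι → ℤ) :
    Function.uncurry Rtri (∑ i ∈ s, k i • (d i, e i)) = ∑ i ∈ s, (k i : ℝ) • Rtri (d i) (e i) := by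
  rw [map_sum_of_pairwise_eq_zero_or (F := Function.uncurry Rtri) Rtri_zero_zero
    fun i hi j hj hij => ?_]
  · simp only [Prod.smul_mk, Function.uncurry_apply_pair, Rtri_nsmul]
  · rcases hk i hi j hj hij with h | h <;> simp [h]

theorem Polynomial.support_rootMultiplicity_subset [DecidableEq K] {p : K[X]} (hp : p ≠ 0) :
    (Function.support fun v => p.rootMultiplicity v) ⊆ p.roots.toFinset := fun v hv => by
  simpa [hp] using (rootMultiplicity_pos hp).mp (Nat.pos_of_ne_zero hv)

theorem Polynomial.finite_support_rootMultiplicity {p : K[X]} (hp : p ≠ 0) :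
    (Function.support fun v => p.rootMultiplicity v).Finite := by
  classical
  exact p.roots.toFinset.finite_toSet.subset (support_rootMultiplicity_subset hp)

theorem Polynomial.finsum_rootMultiplicity [IsAlgClosed K] {p : K[X]} (hp : p ≠ 0) :
    ∑ᶠ v, p.rootMultiplicity v = p.natDegree := by
  classical
  rw [finsum_eq_sum_of_support_subset _ (support_rootMultiplicity_subset hp)]
  simp_rw [← count_roots, Multiset.toFinset_sum_count_eq, IsAlgClosed.card_roots_eq_natDegree]

theorem IsCoprime.rootMultiplicity_eq_zero_or {p q : K[X]} (h : IsCoprime p q) (v : K) :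
    p.rootMultiplicity v = 0 ∨ q.rootMultiplicity v = 0 := by
  rcases aeval_ne_zero_of_isCoprime h v with hp | hq
  · exact .inl (rootMultiplicity_eq_zero (by simpa using hp))
  · exact .inr (rootMultiplicity_eq_zero (by simpa using hq))

/-- **Lemma (partial factorizations).** Let `Ps ⊂ K[t]` be a finite set of nonconstant,
pairwise coprime polynomials, `d_p, e_p ∈ ℤ`, `α, β ∈ K^×`, and
`f = α·∏ p^{d_p}`, `g = β·∏ p^{e_p}`.  Then
`Σ_{v∈K} R_{(ord_v f, ord_v g)} = Σ_{p∈Ps} deg(p)·R_{(d_p,e_p)}` (all but finitely many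
summands on the left equal `{(0,0)}`) and
`(ord_∞ f, ord_∞ g) = (−Σ d_p·deg p, −Σ e_p·deg p)`. -/
theorem stmt16 {K : Type*} [Field K] [IsAlgClosed K]
    (Ps : Finset (Polynomial K)) (hdeg : ∀ p ∈ Ps, 0 < p.natDegree)
    (hcop : ∀ p ∈ Ps, ∀ q ∈ Ps, p ≠ q → IsCoprime p q)
    (d e : Polynomial K → ℤ) (α β : K) (hα : α ≠ 0) (hβ : β ≠ 0)
    (f g : RatFunc K)
    (hf : f = RatFunc.C α * ∏ p ∈ Ps, (algebraMap (Polynomial K) (RatFunc K) p) ^ d p)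
    (hg : g = RatFunc.C β * ∏ p ∈ Ps, (algebraMap (Polynomial K) (RatFunc K) p) ^ e p) :
    {v : K | (ordAt v f, ordAt v g) ≠ (0, 0)}.Finite ∧
    (∑ᶠ v : K, Rtri (ordAt v f) (ordAt v g)) =
      ∑ p ∈ Ps, (p.natDegree : ℝ) • Rtri (d p) (e p) ∧
    (ordInf f, ordInf g) =
      (-(∑ p ∈ Ps, d p * p.natDegree), -(∑ p ∈ Ps, e p * p.natDegree)) := by
  have hP : ∀ p ∈ Ps, p ≠ 0 := fun p hp => ne_zero_of_natDegree_gt (hdeg p hp)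
  have hord : ∀ v, (ordAt v f, ordAt v g) = ∑ p ∈ Ps, p.rootMultiplicity v • (d p, e p) := by
    intro v
    simp [hf, hg, ordAt_C_mul_prod_zpow hα hP, ordAt_C_mul_prod_zpow hβ hP, Prod.ext_iff,
      Prod.fst_sum, Prod.snd_sum, mul_comm]
  refine ⟨?_, ?_, ?_⟩
  · refine (Ps.finite_toSet.biUnion fun p hp =>
      finite_support_rootMultiplicity (hP p hp)).subset fun v hv => ?_
    obtain ⟨p, hp, hpv⟩ := Finset.exists_ne_zero_of_sum_ne_zero ((hord v).symm.trans_ne hv)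
    exact Set.mem_iUnion₂.mpr ⟨p, hp, fun h => hpv (by simp [h])⟩
  · calc ∑ᶠ v, Rtri (ordAt v f) (ordAt v g)
        = ∑ᶠ v, ∑ p ∈ Ps, (p.rootMultiplicity v : ℝ) • Rtri (d p) (e p) :=
          finsum_congr fun v => by
            rw [← Function.uncurry_apply_pair Rtri, hord v, uncurry_Rtri_sum_nsmul
              fun p hp q hq hpq => (hcop p hp q hq hpq).rootMultiplicity_eq_zero_or v]
      _ = ∑ p ∈ Ps, ∑ᶠ v, (p.rootMultiplicity v : ℝ) • Rtri (d p) (e p) :=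
          finsum_sum_comm Ps _ fun p hp => (finite_support_rootMultiplicity (hP p hp)).subset
            (support_natCast_smul_subset (Rtri_nonempty _ _) _)
      _ = ∑ p ∈ Ps, (p.natDegree : ℝ) • Rtri (d p) (e p) :=
          Finset.sum_congr rfl fun p hp => by
            rw [(convex_Rtri _ _).finsum_natCast_smul (Rtri_nonempty _ _)
              (finite_support_rootMultiplicity (hP p hp)), finsum_rootMultiplicity (hP p hp)]
  · rw [ordInf_eq_neg_intDegree, ordInf_eq_neg_intDegree, hf, hg,
      intDegree_C_mul_prod_zpow hα hP, intDegree_C_mul_prod_zpow hβ hP]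
end
end
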